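/- arXiv:math/0501415 — 2 statements merged into one kernel-verified Lean document; each statement's English description precedes it below -/
import Mathlib

section
/- Let (E_{s,t}) be a system of operators on a filtered probability space satisfying the zero-one law (A4): for all s ≤ t, X ∈ L²(F_t), and A ∈ F_s, 1_A·E_{s,t}[X] = 1_A·E_{s,t}[1_A·X] a.s. Then (A4) together with the normalization E_{s,t}[0] = 0 a.s. is equivalent to the strong zero-one law (A4'): 1_A·E_{s,t}[X] = E_{s,t}[1_A·X] a.s. for all A ∈ F_s. -/
open MeasureTheory Set Filter

/-- For a system of operators `E s t : L²(F_t) → L²(F_s)`, the zero-one law (A4)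
together with the normalization `E_{s,t}[0] = 0` (A4₀) is equivalent to the strong zero-one
law (A4'): `1_A · E_{s,t}[X] = E_{s,t}[1_A · X]` a.s. for all `A ∈ F_s`. -/
theorem a4_and_a4zero_iff_a4'
    {Ω : Type*} [MeasurableSpace Ω] (P : Measure Ω) [IsProbabilityMeasure P]
    (T : ℝ) (F : ℝ → MeasurableSpace Ω)
    (E : ℝ → ℝ → (Ω → ℝ) → Ω → ℝ) :
    ((∀ s t, 0 ≤ s → s ≤ t → t ≤ T → ∀ (X : Ω → ℝ) (A : Set Ω),
        MeasurableSet[F s] A →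
        A.indicator (E s t X) =ᵐ[P] A.indicator (E s t (A.indicator X))) ∧
      (∀ s t, 0 ≤ s → s ≤ t → t ≤ T → E s t 0 =ᵐ[P] 0))
    ↔ (∀ s t, 0 ≤ s → s ≤ t → t ≤ T → ∀ (X : Ω → ℝ) (A : Set Ω),
        MeasurableSet[F s] A →
        A.indicator (E s t X) =ᵐ[P] E s t (A.indicator X)) := by
  constructor
  · rintro ⟨h4, h0⟩ s t hs hst htT X A hA
    have h1 := h4 s t hs hst htT X A hA
    have h2 := h4 s t hs hst htT (A.indicator X) Aᶜ hA.compl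
    have h0' := h0 s t hs hst htT
    have hz : Aᶜ.indicator (A.indicator X) = 0 := by
      funext ω; simp [Set.indicator_indicator]
    rw [hz] at h2
    filter_upwards [h1, h2, h0'] with ω hω1 hω2 hω0
    by_cases hω : ω ∈ A
    · have : E s t X ω = E s t (A.indicator X) ω := by
        simpa [Set.indicator_of_mem hω] using hω1
      simp [Set.indicator_of_mem hω, this]
    · have hωc : ω ∈ Aᶜ := hω
      have : E s t (A.indicator X) ω = E s t 0 ω := by
        simpa [Set.indicator_of_mem hωc] using hω2
      simp [Set.indicator_of_notMem hω, this, hω0]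
  · intro h
    constructor
    · intro s t hs hst htT X A hA
      have h1 := h s t hs hst htT X A hA
      have h2 := h s t hs hst htT (A.indicator X) A hA
      rw [Set.indicator_indicator, Set.inter_self] at h2
      exact h1.trans h2.symm
    · intro s t hs hst htT
      have h1 := h s t hs hst htT 0 ∅ (@MeasurableSet.empty Ω (F s))
      exact (by simpa using h1.symm : E s t 0 =ᵐ[P] fun _ => (0:ℝ))
end

section
/- The zero-one law (A4) is equivalent to local decomposability: for each 0 ≤ s ≤ t, X, X' ∈ L²(F_t), and A ∈ F_s, one has E_{s,t}[1_A·X + 1_{Aᶜ}·X'] = 1_A·E_{s,t}[X] + 1_{Aᶜ}·E_{s,t}[X'] a.s. -/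
open MeasureTheory Set Filter

/-- The zero-one law (A4) is equivalent to local decomposability:
`E_{s,t}[1_A X + 1_{Aᶜ} X'] = 1_A E_{s,t}[X] + 1_{Aᶜ} E_{s,t}[X']` a.s. for all `A ∈ F_s`. -/
theorem a4_iff_local_decomposability
    {Ω : Type*} [MeasurableSpace Ω] (P : Measure Ω) [IsProbabilityMeasure P]
    (T : ℝ) (F : ℝ → MeasurableSpace Ω)
    (E : ℝ → ℝ → (Ω → ℝ) → Ω → ℝ) :
    (∀ s t, 0 ≤ s → s ≤ t → t ≤ T → ∀ (X : Ω → ℝ) (A : Set Ω),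
        MeasurableSet[F s] A →
        A.indicator (E s t X) =ᵐ[P] A.indicator (E s t (A.indicator X)))
    ↔ (∀ s t, 0 ≤ s → s ≤ t → t ≤ T → ∀ (X X' : Ω → ℝ) (A : Set Ω),
        MeasurableSet[F s] A →
        E s t (A.indicator X + Aᶜ.indicator X')
          =ᵐ[P] A.indicator (E s t X) + Aᶜ.indicator (E s t X')) := by
  constructor
  · intro h s t hs hst htT X X' A hA
    set Y := A.indicator X + Aᶜ.indicator X' with hY
    have hAY : A.indicator Y = A.indicator X := by
      funext ω; by_cases hω : ω ∈ A <;>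
        simp [hY, Set.indicator_apply, hω]
    have hAcY : Aᶜ.indicator Y = Aᶜ.indicator X' := by
      funext ω; by_cases hω : ω ∈ A <;>
        simp [hY, Set.indicator_apply, hω]
    have h1 := h s t hs hst htT Y A hA
    have h2 := h s t hs hst htT X A hA
    have h1' := h s t hs hst htT Y Aᶜ hA.compl
    have h2' := h s t hs hst htT X' Aᶜ hA.compl
    rw [hAY] at h1
    rw [hAcY] at h1'
    filter_upwards [h1, h2, h1', h2'] with ω e1 e2 e1' e2'
    have key : E s t Y ω = A.indicator (E s t Y) ω + Aᶜ.indicator (E s t Y) ω := by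
      by_cases hω : ω ∈ A <;> simp [Set.indicator_apply, hω]
    simp only [Pi.add_apply]
    rw [key, e1, ← e2, e1', ← e2']
  · intro h s t hs hst htT X A hA
    have h1 := h s t hs hst htT X X A hA
    have h2 := h s t hs hst htT (A.indicator X) X A hA
    have hidem : A.indicator (A.indicator X) = A.indicator X := by
      funext ω; by_cases hω : ω ∈ A <;> simp [Set.indicator_apply, hω]
    rw [hidem] at h2
    filter_upwards [h1, h2] with ω e1 e2
    have e3 := e1.symm.trans e2
    simp only [Pi.add_apply] at e3
    by_cases hω : ω ∈ A
    · simpa [Set.indicator_apply, hω] using e3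
    · simp [Set.indicator_apply, hω]
end
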